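/- arXiv:1808.01636 — 2 statements merged into one kernel-verified Lean document; each statement's English description precedes it below -/
import Mathlib

section
/- The forcing notion Q(H̄) is (<κ)-complete: every increasing sequence ⟨p_α : α < δ⟩ of conditions in Q(H̄) of limit length δ < κ has an upper bound in Q(H̄). -/
open Ordinal Set Cardinal

noncomputable section

/-- A "sequence" coded as (length, values padded by 0 off the domain). -/
abbrev OSeq : Type 1 := Ordinal × (Ordinal → Ordinal)

/-- The restriction `f↾α` of `f` to ordinals below `α`. -/
def restr (f : Ordinal → Ordinal) (α : Ordinal) : OSeq :=
  (α, fun β => if β < α then f β else 0)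

/-- `s` is a sequence of length `< κ` with values `< κ`. -/
def IsSeq (κ : Cardinal) (s : OSeq) : Prop :=
  s.1 < κ.ord ∧ (∀ β < s.1, s.2 β < κ.ord) ∧ ∀ β, ¬ β < s.1 → s.2 β = 0

/-- A condition of the forcing Q(H̄): a tuple (γ, e, v, u, h) where γ < κ,
e ⊆ γ+1 is closed with max(e) = γ, v ∈ [F]^{<κ} with distinct members
separated at γ, and h is a partial function with domain
u = {f↾α : α ∈ e, f ∈ v} and values in κ^{<κ}. -/
structure Cond (κ : Cardinal) (F : Set (Ordinal → Ordinal)) where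
  γ : Ordinal
  e : Set Ordinal
  v : Set (Ordinal → Ordinal)
  h : OSeq → Option OSeq
  γ_lt : γ < κ.ord
  e_sub : e ⊆ Set.Iic γ
  e_closed : ∀ S ⊆ e, S.Nonempty → sSup S ∈ e
  γ_mem : γ ∈ e
  v_sub : v ⊆ F
  v_small : #v < Cardinal.lift.{1,0} κ
  sep : ∀ f ∈ v, ∀ g ∈ v, f ≠ g → restr f γ ≠ restr g γ
  h_dom : ∀ s, (h s ≠ none) ↔ ∃ f ∈ v, ∃ α ∈ e, s = restr f α
  h_seq : ∀ s t, h s = some t → IsSeq κ t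

/-- The set u of a condition: all restrictions f↾α, f ∈ v, α ∈ e. -/
def Cond.u {κ : Cardinal} {F : Set (Ordinal → Ordinal)} (p : Cond κ F) : Set OSeq :=
  {s | ∃ f ∈ p.v, ∃ α ∈ p.e, s = restr f α}

/-- The order of Q(H̄): p ≤ q iff γᵖ ≤ γ^q, eᵖ = e^q ∩ (γᵖ+1), vᵖ ⊆ v^q,
hᵖ ⊆ h^q, and h^q(f↾α) = H_f(α) for f ∈ vᵖ and α ∈ e^q \ eᵖ. -/
def Qle {κ : Cardinal} {F : Set (Ordinal → Ordinal)}
    (H : (Ordinal → Ordinal) → Ordinal → OSeq) (p q : Cond κ F) : Prop :=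
  p.γ ≤ q.γ ∧ p.e = q.e ∩ Set.Iic p.γ ∧ p.v ⊆ q.v ∧
  (∀ s t, p.h s = some t → q.h s = some t) ∧
  ∀ f ∈ p.v, ∀ α ∈ q.e, α ∉ p.e → q.h (restr f α) = some (H f α)

/-- Compatibility: a common upper bound exists. -/
def Compat {κ : Cardinal} {F : Set (Ordinal → Ordinal)}
    (H : (Ordinal → Ordinal) → Ordinal → OSeq) (p q : Cond κ F) : Prop :=
  ∃ r, Qle H p r ∧ Qle H q r

/-!
An upper bound of a directed family `⟨pᵢ⟩` of fewer than `κ` conditions is obtained by taking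
unions: `γ = sup γᵢ`, `e = {γ} ∪ ⋃ eᵢ`, `v = ⋃ vᵢ` and `h = ⋃ hᵢ`, extended at the only new
level `γ` (if it is new) by `h(f↾γ) = H_f(γ)`. Regularity of `κ` keeps `γ < κ` and `|v| < κ`;
directedness makes the `hᵢ` agree, puts every bounded subset of `e` inside some `eᵢ` (so `e` is
closed), and separates distinct members of `v` already below some `γᵢ`.
-/

theorem restr_eq_restr_iff {f g : Ordinal → Ordinal} {α : Ordinal} :
    restr f α = restr g α ↔ ∀ β < α, f β = g β := by
  refine ⟨fun h β hβ => ?_, fun h => ?_⟩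
  · simpa [restr, hβ] using congrFun (congrArg Prod.snd h) β
  · refine Prod.ext rfl (funext fun β => ?_)
    by_cases hβ : β < α
    · simp only [restr, if_pos hβ, h β hβ]
    · simp only [restr, if_neg hβ]

theorem restr_ne_restr_of_le {f g : Ordinal → Ordinal} {α α' : Ordinal} (hα : α ≤ α')
    (hne : restr f α ≠ restr g α) : restr f α' ≠ restr g α' := by
  rw [Ne, restr_eq_restr_iff] at hne ⊢
  exact fun h => hne fun β hβ => h β (hβ.trans_le hα)

variable {κ : Cardinal} {F : Set (Ordinal → Ordinal)} {H : (Ordinal → Ordinal) → Ordinal → OSeq}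

namespace Qle

variable {p q : Cond κ F}

theorem e_subset (hpq : Qle H p q) : p.e ⊆ q.e := by
  rw [hpq.2.1]
  exact inter_subset_left

theorem mem_e (hpq : Qle H p q) {x : Ordinal} (hx : x ∈ q.e) (hxγ : x ≤ p.γ) : x ∈ p.e := by
  rw [hpq.2.1]
  exact ⟨hx, hxγ⟩

theorem v_subset (hpq : Qle H p q) : p.v ⊆ q.v :=
  hpq.2.2.1

theorem h_eq_some (hpq : Qle H p q) {s t : OSeq} (h : p.h s = some t) : q.h s = some t :=
  hpq.2.2.2.1 s t h

theorem h_restr_of_notMem (hpq : Qle H p q) {f : Ordinal → Ordinal} (hf : f ∈ p.v)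
    {α : Ordinal} (hα : α ∈ q.e) (hαp : α ∉ p.e) : q.h (restr f α) = some (H f α) :=
  hpq.2.2.2.2 f hf α hα hαp

end Qle

namespace Cond

variable {ι : Type 1} (p : ι → Cond κ F)

def limγ : Ordinal := ⨆ i, (p i).γ

def limE : Set Ordinal := insert (limγ p) (⋃ i, (p i).e)

def limV : Set (Ordinal → Ordinal) := ⋃ i, (p i).v

open Classical in
variable (H) in
def limH (s : OSeq) : Option OSeq :=
  if hc : ∃ i, (p i).h s ≠ none then (p hc.choose).h s
  else if hd : ∃ f ∈ limV p, s = restr f (limγ p) then some (H hd.choose (limγ p)) else none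

theorem le_limγ (i : ι) : (p i).γ ≤ limγ p :=
  le_ciSup ⟨κ.ord, by rintro _ ⟨j, rfl⟩; exact (p j).γ_lt.le⟩ i

theorem limγ_lt (hreg : κ.IsRegular) (hι : #ι < Cardinal.lift.{1} κ) : limγ p < κ.ord := by
  refine Ordinal.lift_iSup_lt_of_lt_cof ?_ fun i => (p i).γ_lt
  rwa [Cardinal.lift_id'.{0, 1}, ← Ordinal.lift_cof, hreg.cof_ord]

theorem limV_small (hreg : κ.IsRegular) (hι : #ι < Cardinal.lift.{1} κ) :
    #(limV p) < Cardinal.lift.{1} κ :=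
  (card_iUnion_lt_iff_forall_of_isRegular hreg.lift hι).2 fun i => (p i).v_small

theorem limE_subset_Iic : limE p ⊆ Iic (limγ p) := by
  rintro x (rfl | hx)
  · exact self_mem_Iic
  · obtain ⟨i, hx⟩ := mem_iUnion.1 hx
    exact ((p i).e_sub hx).trans (le_limγ p i)

variable {p}

theorem limH_isSeq (hH : ∀ f ∈ F, ∀ α < κ.ord, IsSeq κ (H f α)) (hγ : limγ p < κ.ord)
    (s t : OSeq) (hst : limH H p s = some t) : IsSeq κ t := by
  by_cases hc : ∃ i, (p i).h s ≠ none
  · rw [limH, dif_pos hc] at hst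
    exact (p _).h_seq s t hst
  · rw [limH, dif_neg hc] at hst
    split_ifs at hst with hd
    obtain ⟨hf, -⟩ := hd.choose_spec
    obtain ⟨i, hf⟩ := mem_iUnion.1 hf
    exact Option.some_inj.1 hst ▸ hH _ ((p i).v_sub hf) _ hγ

variable (hdir : Directed (Qle H) p)
include hdir

theorem mem_e_of_mem_limE {x : Ordinal} (hx : x ∈ limE p) (i : ι) (hxγ : x ≤ (p i).γ) :
    x ∈ (p i).e := by
  rcases hx with rfl | hx
  · rw [le_antisymm hxγ (le_limγ p i)]
    exact (p i).γ_mem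
  · obtain ⟨j, hx⟩ := mem_iUnion.1 hx
    obtain ⟨k, hik, hjk⟩ := hdir i j
    exact hik.mem_e (hjk.e_subset hx) hxγ

theorem limE_closed (S : Set Ordinal) (hS : S ⊆ limE p) (hne : S.Nonempty) : sSup S ∈ limE p := by
  have hbdd : ∀ x ∈ S, x ≤ limγ p := fun x hx => limE_subset_Iic p (hS hx)
  rcases (csSup_le hne hbdd).eq_or_lt with heq | hlt
  · exact heq ▸ mem_insert _ _
  · obtain ⟨i, hi⟩ := exists_lt_of_lt_ciSup' hlt
    have hSi : S ⊆ (p i).e := fun x hx =>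
      mem_e_of_mem_limE hdir (hS hx) i ((le_csSup ⟨_, hbdd⟩ hx).trans hi.le)
    exact mem_insert_of_mem _ (mem_iUnion.2 ⟨i, (p i).e_closed S hSi hne⟩)

theorem limV_sep : ∀ f ∈ limV p, ∀ g ∈ limV p, f ≠ g → restr f (limγ p) ≠ restr g (limγ p) := by
  intro f hf g hg hfg
  obtain ⟨i, hf⟩ := mem_iUnion.1 hf
  obtain ⟨j, hg⟩ := mem_iUnion.1 hg
  obtain ⟨k, hik, hjk⟩ := hdir i j
  exact restr_ne_restr_of_le (le_limγ p k)
    ((p k).sep f (hik.v_subset hf) g (hjk.v_subset hg) hfg)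

theorem limH_eq_of_h_eq {s t : OSeq} {i : ι} (hst : (p i).h s = some t) : limH H p s = some t := by
  have hc : ∃ j, (p j).h s ≠ none := ⟨i, by simp [hst]⟩
  rw [limH, dif_pos hc]
  obtain ⟨t', ht'⟩ := Option.ne_none_iff_exists'.1 hc.choose_spec
  obtain ⟨k, hik, hjk⟩ := hdir i hc.choose
  rw [ht', ← Option.some_inj.1 ((hik.h_eq_some hst).symm.trans (hjk.h_eq_some ht'))]

theorem limH_restr_limγ {f : Ordinal → Ordinal} (hf : f ∈ limV p) (hnew : limγ p ∉ ⋃ i, (p i).e) :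
    limH H p (restr f (limγ p)) = some (H f (limγ p)) := by
  have hc : ¬ ∃ i, (p i).h (restr f (limγ p)) ≠ none := by
    rintro ⟨i, hi⟩
    obtain ⟨g, -, α, hα, hs⟩ := ((p i).h_dom _).1 hi
    cases congrArg Prod.fst hs
    exact hnew (mem_iUnion.2 ⟨i, hα⟩)
  have hd : ∃ g ∈ limV p, restr f (limγ p) = restr g (limγ p) := ⟨f, hf, rfl⟩
  rw [limH, dif_neg hc, dif_pos hd]
  obtain ⟨hgV, hfg⟩ := hd.choose_spec
  by_contra hne
  exact limV_sep hdir _ hgV f hf (fun h => hne (by rw [h])) hfg.symm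

theorem limH_restr {f : Ordinal → Ordinal} {α : Ordinal} {i : ι} (hf : f ∈ (p i).v)
    (hα : α ∈ limE p) (hαi : α ∉ (p i).e) : limH H p (restr f α) = some (H f α) := by
  by_cases hold : α ∈ ⋃ j, (p j).e
  · obtain ⟨j, hα⟩ := mem_iUnion.1 hold
    obtain ⟨k, hik, hjk⟩ := hdir i j
    exact limH_eq_of_h_eq hdir (hik.h_restr_of_notMem hf (hjk.e_subset hα) hαi)
  · obtain rfl : α = limγ p := hα.resolve_right hold
    exact limH_restr_limγ hdir (mem_iUnion.2 ⟨i, hf⟩) hold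

theorem limH_ne_none_iff (s : OSeq) :
    limH H p s ≠ none ↔ ∃ f ∈ limV p, ∃ α ∈ limE p, s = restr f α := by
  constructor
  · intro hs
    by_cases hc : ∃ i, (p i).h s ≠ none
    · obtain ⟨f, hf, α, hα, rfl⟩ := ((p hc.choose).h_dom s).1 hc.choose_spec
      exact ⟨f, mem_iUnion.2 ⟨_, hf⟩, α, mem_insert_of_mem _ (mem_iUnion.2 ⟨_, hα⟩), rfl⟩
    · rw [limH, dif_neg hc] at hs
      by_cases hd : ∃ f ∈ limV p, s = restr f (limγ p)
      · obtain ⟨hf, hs⟩ := hd.choose_spec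
        exact ⟨_, hf, _, mem_insert _ _, hs⟩
      · rw [dif_neg hd] at hs
        exact absurd rfl hs
  · rintro ⟨f, hf, α, hα, rfl⟩
    obtain ⟨i, hf⟩ := mem_iUnion.1 hf
    by_cases hαi : α ∈ (p i).e
    · obtain ⟨t, ht⟩ := Option.ne_none_iff_exists'.1 (((p i).h_dom _).2 ⟨f, hf, α, hαi, rfl⟩)
      simp [limH_eq_of_h_eq hdir ht]
    · simp [limH_restr hdir hf hα hαi]

variable (hreg : κ.IsRegular) (hι : #ι < Cardinal.lift.{1} κ)
  (hH : ∀ f ∈ F, ∀ α < κ.ord, IsSeq κ (H f α))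

def lim : Cond κ F where
  γ := limγ p
  e := limE p
  v := limV p
  h := limH H p
  γ_lt := limγ_lt p hreg hι
  e_sub := limE_subset_Iic p
  e_closed := limE_closed hdir
  γ_mem := mem_insert _ _
  v_sub := iUnion_subset fun i => (p i).v_sub
  v_small := limV_small p hreg hι
  sep := limV_sep hdir
  h_dom := limH_ne_none_iff hdir
  h_seq := limH_isSeq hH (limγ_lt p hreg hι)

theorem le_lim (i : ι) : Qle H (p i) (lim hdir hreg hι hH) := by
  refine ⟨le_limγ p i, ?_, subset_iUnion (fun j => (p j).v) i,
    fun s t => limH_eq_of_h_eq hdir, fun f hf α hα hαi => limH_restr hdir hf hα hαi⟩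
  ext x
  exact ⟨fun hx => ⟨mem_insert_of_mem _ (mem_iUnion.2 ⟨i, hx⟩), (p i).e_sub hx⟩,
    fun hx => mem_e_of_mem_limE hdir hx.1 i hx.2⟩

end Cond

theorem stmt4_general (κ : Cardinal) (hreg : κ.IsRegular)
    (F : Set (Ordinal → Ordinal))
    (H : (Ordinal → Ordinal) → Ordinal → OSeq)
    (hH : ∀ f ∈ F, ∀ α < κ.ord, IsSeq κ (H f α))
    (δ : Ordinal) (hδ : δ < κ.ord)
    (p : Ordinal → Cond κ F)
    (hinc : ∀ α β, α ≤ β → β < δ → Qle H (p α) (p β)) :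
    ∃ q : Cond κ F, ∀ α < δ, Qle H (p α) q := by
  let q : Iio δ → Cond κ F := fun α => p α
  have hdir : Directed (Qle H) q := fun α β =>
    have hmax : max α.1 β.1 < δ := max_lt α.2 β.2
    ⟨⟨_, hmax⟩, hinc _ _ (le_max_left _ _) hmax, hinc _ _ (le_max_right _ _) hmax⟩
  have hcard : #(Iio δ) < Cardinal.lift.{1} κ := by
    rw [Cardinal.mk_Iio_ordinal, Cardinal.lift_lt]
    exact Cardinal.lt_ord.1 hδ
  exact ⟨Cond.lim hdir hreg hcard hH, fun α hα => Cond.le_lim hdir hreg hcard hH ⟨α, hα⟩⟩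

/-- Q(H̄) is (<κ)-complete: any increasing sequence of limit length δ < κ
has an upper bound. -/
theorem stmt4 (κ : Cardinal) (hreg : κ.IsRegular) (hunc : ℵ₀ < κ)
    (F : Set (Ordinal → Ordinal))
    (hFsep : ∀ f ∈ F, ∀ g ∈ F, f ≠ g → ∃ β < κ.ord, f β ≠ g β)
    (H : (Ordinal → Ordinal) → Ordinal → OSeq)
    (hH : ∀ f ∈ F, ∀ α < κ.ord, IsSeq κ (H f α))
    (δ : Ordinal) (hδ : δ < κ.ord) (hlim : Order.IsSuccLimit δ)
    (p : Ordinal → Cond κ F)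
    (hinc : ∀ α β, α ≤ β → β < δ → Qle H (p α) (p β)) :
    ∃ q : Cond κ F, ∀ α < δ, Qle H (p α) q :=
  stmt4_general κ hreg F H hH δ hδ p hinc
end
end

section
/- The forcing notion Q(H̄) has the κ⁺-Knaster property: every sequence ⟨p_α : α < κ⁺⟩ of conditions in Q(H̄) has a subsequence of length κ⁺ whose members are pairwise compatible. -/
open Ordinal Set Cardinal

noncomputable section

/-! Apart from its set `v` of functions, a condition is the triple `(γ, e, h)`, and since
`κ^{<κ} = κ` there are at most `κ` such triples; by pigeonhole, `κ⁺` of the given conditions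
share one. Two conditions with the same triple are compatible: by regularity of `κ` there is a
level `γ' < κ` above `γ` at which the fewer than `κ` functions of `vᵖ ∪ v^q` are pairwise
separated, and adding `γ'` on top of `e`, with `h(f↾γ') = H_f(γ')`, gives a common extension. -/

universe u

theorem restr_ne_restr_of_lt {f g : Ordinal → Ordinal} {β δ : Ordinal} (hβ : β < δ)
    (hfg : f β ≠ g β) : restr f δ ≠ restr g δ := fun h =>
  hfg (by simpa [restr, hβ] using congr_fun (congr_arg Prod.snd h) β)

theorem isSeq_restr {κ : Cardinal} {f : Ordinal → Ordinal} {α : Ordinal} (hα : α < κ.ord)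
    (hf : ∀ β < κ.ord, f β < κ.ord) : IsSeq κ (restr f α) :=
  ⟨hα, fun β hβ => (if_pos (show β < α from hβ)).trans_lt (hf β (hβ.trans hα)),
    fun _ hβ => if_neg hβ⟩

theorem exists_forall_lt_of_mk_lt {κ : Cardinal.{u}} (hκ : κ.IsRegular) {s : Set Ordinal.{u}}
    (hs : s ⊆ Iio κ.ord) (hcard : #s < Cardinal.lift.{u + 1} κ) :
    ∃ γ < κ.ord, ∀ β ∈ s, β < γ :=
  ⟨sSup ((· + 1) '' s),
    Ordinal.sSup_add_one_lt_of_lt_cof (by rwa [← Ordinal.lift_cof, hκ.cof_ord]) hs,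
    fun β hβ => (Order.lt_add_one_iff.2 le_rfl).trans_le
      (le_csSup ⟨κ.ord, forall_mem_image.2 fun _ hβ' => Order.add_one_le_of_lt (hs hβ')⟩
        (mem_image_of_mem _ hβ))⟩

theorem mk_iUnion_Iio_ord_le {X : Type (u + 1)} {κ : Cardinal.{u}} (hκ : ℵ₀ ≤ κ)
    (T : Iio κ.ord → Set X) (hT : ∀ δ, #(T δ) ≤ Cardinal.lift.{u + 1} κ) :
    #(⋃ δ, T δ) ≤ Cardinal.lift.{u + 1} κ := by
  have hκ' : ℵ₀ ≤ Cardinal.lift.{u + 1} κ := Cardinal.aleph0_le_lift.2 hκ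
  calc #(⋃ δ, T δ) ≤ #(Iio κ.ord) * ⨆ δ, #(T δ) := mk_iUnion_le T
    _ ≤ Cardinal.lift.{u + 1} κ * Cardinal.lift.{u + 1} κ :=
        mul_le_mul' (by rw [Cardinal.mk_Iio_ordinal, card_ord]) (ciSup_le' hT)
    _ = Cardinal.lift.{u + 1} κ := mul_eq_self hκ'

theorem lift_power_card_le {κ : Cardinal.{u}} (hpow : κ ^< κ = κ) {δ : Ordinal.{u}}
    (hδ : δ < κ.ord) :
    Cardinal.lift.{u + 1} κ ^ Cardinal.lift.{u + 1} δ.card ≤ Cardinal.lift.{u + 1} κ := by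
  rw [← Cardinal.lift_power, Cardinal.lift_le]
  exact (le_powerlt κ (lt_ord.1 hδ)).trans_eq hpow

theorem mk_subsets_mk_lt_le {X : Type (u + 1)} {κ : Cardinal.{u}} (hκ : ℵ₀ ≤ κ)
    (hpow : κ ^< κ = κ) {A : Set X} (hA : #A ≤ Cardinal.lift.{u + 1} κ) :
    #{t : Set X | t ⊆ A ∧ #t < Cardinal.lift.{u + 1} κ} ≤ Cardinal.lift.{u + 1} κ := by
  have hcover : {t : Set X | t ⊆ A ∧ #t < Cardinal.lift.{u + 1} κ} ⊆
      ⋃ δ : Iio κ.ord, {t | t ⊆ A ∧ #t ≤ Cardinal.lift.{u + 1} δ.1.card} := by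
    rintro t ⟨htA, ht⟩
    obtain ⟨μ, hμ, hμt⟩ := Cardinal.lt_lift_iff.1 ht
    exact mem_iUnion.2 ⟨⟨μ.ord, ord_lt_ord.2 hμ⟩, htA, by rw [card_ord, hμt]⟩
  refine (mk_le_mk_of_subset hcover).trans (mk_iUnion_Iio_ord_le hκ _ fun δ => ?_)
  calc #{t | t ⊆ A ∧ #t ≤ Cardinal.lift.{u + 1} δ.1.card}
      ≤ max #A ℵ₀ ^ Cardinal.lift.{u + 1} δ.1.card := mk_bounded_subset_le A _
    _ ≤ Cardinal.lift.{u + 1} κ ^ Cardinal.lift.{u + 1} δ.1.card :=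
        power_le_power_right (max_le hA (Cardinal.aleph0_le_lift.2 hκ))
    _ ≤ Cardinal.lift.{u + 1} κ := lift_power_card_le hpow δ.2

theorem mk_setOf_isSeq_le {κ : Cardinal} (hκ : ℵ₀ ≤ κ) (hpow : κ ^< κ = κ) :
    #{s : OSeq | IsSeq κ s} ≤ Cardinal.lift.{1} κ := by
  have hcover : {s : OSeq | IsSeq κ s} ⊆ ⋃ δ : Iio κ.ord, {s | IsSeq κ s ∧ s.1 = δ} :=
    fun s hs => mem_iUnion.2 ⟨⟨s.1, hs.1⟩, hs, rfl⟩
  refine (mk_le_mk_of_subset hcover).trans (mk_iUnion_Iio_ord_le hκ _ fun δ => ?_)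
  let values : {s | IsSeq κ s ∧ s.1 = δ} → (Iio δ.1 → Iio κ.ord) := fun s β =>
    ⟨s.1.2 β, s.2.1.2.1 β (by rw [s.2.2]; exact β.2)⟩
  have hvalues : Function.Injective values := by
    rintro ⟨s, hs, hsδ⟩ ⟨t, ht, htδ⟩ hst
    refine Subtype.ext (Prod.ext (hsδ.trans htδ.symm) (funext fun β => ?_))
    by_cases hβ : β < δ
    · exact congr_arg Subtype.val (congr_fun hst ⟨β, hβ⟩)
    · rw [hs.2.2 β (hsδ ▸ hβ), ht.2.2 β (htδ ▸ hβ)]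
  calc #{s | IsSeq κ s ∧ s.1 = δ} ≤ #(Iio δ.1 → Iio κ.ord) := mk_le_of_injective hvalues
    _ = Cardinal.lift.{1} κ ^ Cardinal.lift.{1} δ.1.card := by
        rw [← power_def, Cardinal.mk_Iio_ordinal, Cardinal.mk_Iio_ordinal, card_ord]
    _ ≤ Cardinal.lift.{1} κ := lift_power_card_le hpow δ.2

theorem exists_subset_Iio_ord_succ_eq {X : Type (u + 1)} {κ : Cardinal.{u}} (hκ : ℵ₀ ≤ κ)
    (g : Ordinal.{u} → X) {T : Set X} (hT : #T ≤ Cardinal.lift.{u + 1} κ)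
    (hg : MapsTo g (Iio (Order.succ κ).ord) T) :
    ∃ A ⊆ Iio (Order.succ κ).ord, #A = Cardinal.lift.{u + 1} (Order.succ κ) ∧
      ∀ α ∈ A, ∀ β ∈ A, g α = g β := by
  have hsucc : (Cardinal.lift.{u + 1} (Order.succ κ)).IsRegular := (isRegular_succ hκ).lift
  have hIio : #(Iio (Order.succ κ).ord) = Cardinal.lift.{u + 1} (Order.succ κ) := by
    rw [Cardinal.mk_Iio_ordinal, card_ord]
  obtain ⟨t, ht⟩ := infinite_pigeonhole_card hg.restrict _ hIio.ge hsucc.aleph0_le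
    (by rw [hsucc.cof_ord, Cardinal.lift_succ]; exact hT.trans_lt (Order.lt_succ _))
  refine ⟨Subtype.val '' (hg.restrict ⁻¹' {t}), by simp, ?_, ?_⟩
  · rw [mk_image_eq Subtype.val_injective]
    exact le_antisymm (hIio ▸ mk_set_le _) ht
  · rintro _ ⟨α, hα, rfl⟩ _ ⟨β, hβ, rfl⟩
    exact congr_arg Subtype.val (hα.trans hβ.symm)

theorem exists_separating_level {κ : Cardinal} (hκ : κ.IsRegular) {F : Set (Ordinal → Ordinal)}
    (hFsep : ∀ f ∈ F, ∀ g ∈ F, f ≠ g → ∃ β < κ.ord, f β ≠ g β)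
    {v : Set (Ordinal → Ordinal)} (hvF : v ⊆ F) (hv : #v < Cardinal.lift.{1} κ)
    {δ : Ordinal} (hδ : δ < κ.ord) :
    ∃ γ, δ < γ ∧ γ < κ.ord ∧ ∀ f ∈ v, ∀ g ∈ v, f ≠ g → restr f γ ≠ restr g γ := by
  have hκ' : ℵ₀ ≤ Cardinal.lift.{1} κ := Cardinal.aleph0_le_lift.2 hκ.aleph0_le
  have hdiff : ∀ f g : Ordinal → Ordinal,
      ∃ β < κ.ord, f ∈ F → g ∈ F → f ≠ g → f β ≠ g β := by
    intro f g
    by_cases hfg : f ∈ F ∧ g ∈ F ∧ f ≠ g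
    · obtain ⟨β, hβ, hne⟩ := hFsep f hfg.1 g hfg.2.1 hfg.2.2
      exact ⟨β, hβ, fun _ _ _ => hne⟩
    · exact ⟨δ, hδ, fun hf hg hne => (hfg ⟨hf, hg, hne⟩).elim⟩
  choose d hd_lt hd_ne using hdiff
  have hsub : insert δ (image2 d v v) ⊆ Iio κ.ord :=
    insert_subset hδ (image2_subset_iff.2 fun f _ g _ => hd_lt f g)
  have hcard : #(insert δ (image2 d v v) : Set Ordinal) < Cardinal.lift.{1} κ :=
    mk_insert_le.trans_lt (add_lt_of_lt hκ' (mk_image2_le.trans_lt (mul_lt_of_lt hκ' hv hv))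
      (one_lt_aleph0.trans_le hκ'))
  obtain ⟨γ, hγ, hbound⟩ := exists_forall_lt_of_mk_lt hκ hsub hcard
  exact ⟨γ, hbound δ (mem_insert _ _), hγ, fun f hf g hg hfg => restr_ne_restr_of_lt
    (hbound _ (mem_insert_of_mem _ (mem_image2_of_mem hf hg))) (hd_ne f g (hvF hf) (hvF hg) hfg)⟩

theorem sSup_mem_insert {e : Set Ordinal} {γ : Ordinal}
    (he : ∀ S ⊆ e, S.Nonempty → sSup S ∈ e) (heγ : e ⊆ Iic γ) :
    ∀ S ⊆ insert γ e, S.Nonempty → sSup S ∈ insert γ e := by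
  intro S hS hne
  by_cases hγS : γ ∈ S
  · have hle : ∀ x ∈ S, x ≤ γ := fun x hx => (hS hx).elim (fun h => h.le) (fun h => heγ h)
    exact Or.inl (le_antisymm (csSup_le hne hle) (le_csSup ⟨γ, hle⟩ hγS))
  · exact Or.inr (he S (fun x hx => (hS hx).resolve_left fun h => hγS (h ▸ hx)) hne)

section Extension

variable {κ : Cardinal} {F : Set (Ordinal → Ordinal)} (H : (Ordinal → Ordinal) → Ordinal → OSeq)

theorem Cond.length_le_of_h_ne_none (p : Cond κ F) {s : OSeq} (hs : p.h s ≠ none) : s.1 ≤ p.γ := by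
  obtain ⟨f, -, α, hα, rfl⟩ := (p.h_dom s).1 hs
  exact p.e_sub hα

open Classical in
def extendH (h : OSeq → Option OSeq) (v : Set (Ordinal → Ordinal)) (γ : Ordinal) (s : OSeq) :
    Option OSeq :=
  if hs : ∃ f ∈ v, s = restr f γ then some (H hs.choose γ) else h s

theorem extendH_restr {h : OSeq → Option OSeq} {v : Set (Ordinal → Ordinal)} {γ : Ordinal}
    (hsep : ∀ f ∈ v, ∀ g ∈ v, f ≠ g → restr f γ ≠ restr g γ) {f : Ordinal → Ordinal} (hf : f ∈ v) :
    extendH H h v γ (restr f γ) = some (H f γ) := by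
  have hs : ∃ g ∈ v, restr f γ = restr g γ := ⟨f, hf, rfl⟩
  rw [extendH, dif_pos hs]
  by_contra hne
  exact hsep _ hs.choose_spec.1 f hf (fun h => hne (by rw [h])) hs.choose_spec.2.symm

theorem extendH_of_fst_ne {h : OSeq → Option OSeq} {v : Set (Ordinal → Ordinal)} {γ : Ordinal}
    {s : OSeq} (hs : s.1 ≠ γ) : extendH H h v γ s = h s :=
  dif_neg (by rintro ⟨f, -, rfl⟩; exact hs rfl)

variable (hH : ∀ f ∈ F, ∀ α < κ.ord, IsSeq κ (H f α)) (p : Cond κ F) {γ : Ordinal}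
  {v : Set (Ordinal → Ordinal)} (hpγ : p.γ < γ) (hγ : γ < κ.ord) (hvF : v ⊆ F)
  (hv : #v < Cardinal.lift.{1} κ) (hsep : ∀ f ∈ v, ∀ g ∈ v, f ≠ g → restr f γ ≠ restr g γ)
  (hpv : p.v ⊆ v) (hdom : ∀ f ∈ v, ∀ α ∈ p.e, p.h (restr f α) ≠ none)

def Cond.extend : Cond κ F where
  γ := γ
  e := insert γ p.e
  v := v
  h := extendH H p.h v γ
  γ_lt := hγ
  e_sub := insert_subset self_mem_Iic (p.e_sub.trans (Iic_subset_Iic.2 hpγ.le))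
  e_closed := sSup_mem_insert p.e_closed (p.e_sub.trans (Iic_subset_Iic.2 hpγ.le))
  γ_mem := mem_insert _ _
  v_sub := hvF
  v_small := hv
  sep := hsep
  h_dom s := by
    by_cases hs : ∃ f ∈ v, s = restr f γ
    · rw [extendH, dif_pos hs]
      obtain ⟨f, hf, rfl⟩ := hs
      exact iff_of_true (Option.some_ne_none _) ⟨f, hf, γ, mem_insert _ _, rfl⟩
    · rw [extendH, dif_neg hs, p.h_dom]
      constructor
      · rintro ⟨f, hf, α, hα, rfl⟩
        exact ⟨f, hpv hf, α, mem_insert_of_mem _ hα, rfl⟩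
      · rintro ⟨f, hf, α, rfl | hα, rfl⟩
        · exact (hs ⟨f, hf, rfl⟩).elim
        · exact (p.h_dom _).1 (hdom f hf α hα)
  h_seq s t hst := by
    rw [extendH] at hst
    split_ifs at hst with hs
    · exact Option.some.inj hst ▸ hH _ (hvF hs.choose_spec.1) γ hγ
    · exact p.h_seq s t hst

theorem Cond.le_extend (q : Cond κ F) (hqγ : q.γ = p.γ) (hqe : q.e = p.e) (hqh : q.h = p.h)
    (hqv : q.v ⊆ v) : Qle H q (p.extend H hH hpγ hγ hvF hv hsep hpv hdom) := by
  refine ⟨hqγ ▸ hpγ.le, ?_, hqv, fun s t hst => ?_, fun f hf α hα hαq => ?_⟩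
  · change q.e = insert γ p.e ∩ Iic q.γ
    rw [hqe, hqγ, insert_inter_of_notMem (show γ ∉ Iic p.γ from not_le.2 hpγ),
      inter_eq_left.2 p.e_sub]
  · rw [hqh] at hst
    change extendH H p.h v γ s = some t
    rw [extendH_of_fst_ne H ((p.length_le_of_h_ne_none (hst ▸ Option.some_ne_none t)).trans_lt
      hpγ).ne, hst]
  · obtain rfl : α = γ := (mem_insert_iff.1 hα).resolve_right (hqe ▸ hαq)
    exact extendH_restr H hsep (hqv hf)

end Extension

section Coding

variable {κ : Cardinal} {F : Set (Ordinal → Ordinal)}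

theorem Cond.compat_of_eq (hκ : κ.IsRegular)
    (hFsep : ∀ f ∈ F, ∀ g ∈ F, f ≠ g → ∃ β < κ.ord, f β ≠ g β)
    {H : (Ordinal → Ordinal) → Ordinal → OSeq} (hH : ∀ f ∈ F, ∀ α < κ.ord, IsSeq κ (H f α))
    {p q : Cond κ F} (hγ : p.γ = q.γ) (he : p.e = q.e) (hh : p.h = q.h) : Compat H p q := by
  have hκ' : ℵ₀ ≤ Cardinal.lift.{1} κ := Cardinal.aleph0_le_lift.2 hκ.aleph0_le
  have hvF : p.v ∪ q.v ⊆ F := union_subset p.v_sub q.v_sub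
  have hv : #(p.v ∪ q.v : Set (Ordinal → Ordinal)) < Cardinal.lift.{1} κ :=
    (mk_union_le _ _).trans_lt (add_lt_of_lt hκ' p.v_small q.v_small)
  obtain ⟨γ, hpγ, hγκ, hsep⟩ := exists_separating_level hκ hFsep hvF hv p.γ_lt
  have hdom : ∀ f ∈ p.v ∪ q.v, ∀ α ∈ p.e, p.h (restr f α) ≠ none := by
    rintro f (hf | hf) α hα
    · exact (p.h_dom _).2 ⟨f, hf, α, hα, rfl⟩
    · exact hh ▸ (q.h_dom _).2 ⟨f, hf, α, he ▸ hα, rfl⟩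
  exact ⟨_, p.le_extend H hH hpγ hγκ hvF hv hsep subset_union_left hdom p rfl rfl rfl
      subset_union_left,
    p.le_extend H hH hpγ hγκ hvF hv hsep subset_union_left hdom q hγ.symm he.symm hh.symm
      subset_union_right⟩

def Cond.code (q : Cond κ F) : Ordinal × Set Ordinal × Set (OSeq × OSeq) :=
  (q.γ, q.e, {x | q.h x.1 = some x.2})

def codeSpace (κ : Cardinal) : Set (Ordinal × Set Ordinal × Set (OSeq × OSeq)) :=
  Iio κ.ord ×ˢ {e | e ⊆ Iio κ.ord ∧ #e < Cardinal.lift.{1} κ} ×ˢ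
    {G | G ⊆ {s | IsSeq κ s} ×ˢ {s | IsSeq κ s} ∧ #G < Cardinal.lift.{1} κ}

theorem mk_codeSpace_le (hκ : ℵ₀ ≤ κ) (hpow : κ ^< κ = κ) :
    #(codeSpace κ) ≤ Cardinal.lift.{1} κ := by
  have hκ' : ℵ₀ ≤ Cardinal.lift.{1} κ := Cardinal.aleph0_le_lift.2 hκ
  have hIio : #(Iio κ.ord) = Cardinal.lift.{1} κ := by rw [Cardinal.mk_Iio_ordinal, card_ord]
  have hseq := mk_setOf_isSeq_le hκ hpow
  have hseq2 :
      #({s | IsSeq κ s} ×ˢ {s | IsSeq κ s} : Set (OSeq × OSeq)) ≤ Cardinal.lift.{1} κ := by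
    rw [mk_setProd]
    exact (mul_le_mul' hseq hseq).trans (mul_eq_self hκ').le
  rw [codeSpace, mk_setProd, mk_setProd]
  calc _ ≤ Cardinal.lift.{1} κ * (Cardinal.lift.{1} κ * Cardinal.lift.{1} κ) :=
        mul_le_mul' hIio.le (mul_le_mul' (mk_subsets_mk_lt_le hκ hpow hIio.le)
          (mk_subsets_mk_lt_le hκ hpow hseq2))
    _ = Cardinal.lift.{1} κ := by rw [mul_eq_self hκ', mul_eq_self hκ']

theorem Cond.mk_e_lt (hκ : ℵ₀ ≤ κ) (q : Cond κ F) : #q.e < Cardinal.lift.{1} κ := by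
  calc #q.e ≤ #(Iio (Order.succ q.γ)) := mk_le_mk_of_subset (q.e_sub.trans (Order.Iio_succ _).ge)
    _ < Cardinal.lift.{1} κ := by
        rw [Cardinal.mk_Iio_ordinal, Cardinal.lift_lt]
        exact lt_ord.1 ((isSuccLimit_ord hκ).succ_lt q.γ_lt)

theorem Cond.mk_graph_lt (hκ : ℵ₀ ≤ κ) (q : Cond κ F) :
    #{x : OSeq × OSeq | q.h x.1 = some x.2} < Cardinal.lift.{1} κ := by
  have hinj : InjOn Prod.fst {x : OSeq × OSeq | q.h x.1 = some x.2} := fun x hx y hy hxy =>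
    Prod.ext hxy (Option.some.inj (hx.symm.trans (hxy ▸ hy)))
  have hdom : Prod.fst '' {x : OSeq × OSeq | q.h x.1 = some x.2} ⊆ image2 restr q.v q.e := by
    rintro _ ⟨⟨s, t⟩, hst, rfl⟩
    obtain ⟨f, hf, α, hα, rfl⟩ := (q.h_dom s).1 (hst ▸ Option.some_ne_none t)
    exact mem_image2_of_mem hf hα
  rw [← mk_image_eq_of_injOn _ _ hinj]
  exact (mk_le_mk_of_subset hdom).trans_lt (mk_image2_le.trans_lt
    (mul_lt_of_lt (Cardinal.aleph0_le_lift.2 hκ) q.v_small (q.mk_e_lt hκ)))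

theorem Cond.code_mem_codeSpace (hκ : ℵ₀ ≤ κ) (hFrange : ∀ f ∈ F, ∀ β < κ.ord, f β < κ.ord)
    (q : Cond κ F) : q.code ∈ codeSpace κ := by
  refine ⟨q.γ_lt, ⟨fun α hα => (q.e_sub hα).trans_lt q.γ_lt, q.mk_e_lt hκ⟩,
    ⟨fun ⟨s, t⟩ hst => ⟨?_, q.h_seq s t hst⟩, q.mk_graph_lt hκ⟩⟩
  obtain ⟨f, hf, α, hα, rfl⟩ := (q.h_dom s).1 (hst ▸ Option.some_ne_none t)
  exact isSeq_restr ((q.e_sub hα).trans_lt q.γ_lt) (hFrange f (q.v_sub hf))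

theorem Cond.compat_of_code_eq (hκ : κ.IsRegular)
    (hFsep : ∀ f ∈ F, ∀ g ∈ F, f ≠ g → ∃ β < κ.ord, f β ≠ g β)
    {H : (Ordinal → Ordinal) → Ordinal → OSeq} (hH : ∀ f ∈ F, ∀ α < κ.ord, IsSeq κ (H f α))
    {p q : Cond κ F} (hpq : p.code = q.code) : Compat H p q := by
  simp only [Cond.code, Prod.mk.injEq] at hpq
  obtain ⟨hγ, he, hgraph⟩ := hpq
  exact compat_of_eq hκ hFsep hH hγ he
    (funext fun s => Option.ext fun t => Set.ext_iff.1 hgraph (s, t))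

end Coding

theorem stmt6_general (κ : Cardinal) (hreg : κ.IsRegular)
    (hpow : κ ^< κ = κ)
    (F : Set (Ordinal → Ordinal))
    (hFrange : ∀ f ∈ F, ∀ β < κ.ord, f β < κ.ord)
    (hFsep : ∀ f ∈ F, ∀ g ∈ F, f ≠ g → ∃ β < κ.ord, f β ≠ g β)
    (H : (Ordinal → Ordinal) → Ordinal → OSeq)
    (hH : ∀ f ∈ F, ∀ α < κ.ord, IsSeq κ (H f α))
    (p : Ordinal → Cond κ F) :
    ∃ A : Set Ordinal, A ⊆ Set.Iio (Order.succ κ).ord ∧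
      #A = Cardinal.lift.{1,0} (Order.succ κ) ∧
      ∀ α ∈ A, ∀ β ∈ A, Compat H (p α) (p β) := by
  obtain ⟨A, hA, hAcard, hcode⟩ := exists_subset_Iio_ord_succ_eq hreg.aleph0_le
    (fun α => (p α).code) (mk_codeSpace_le hreg.aleph0_le hpow)
    (fun α _ => (p α).code_mem_codeSpace hreg.aleph0_le hFrange)
  exact ⟨A, hA, hAcard, fun α hα β hβ => Cond.compat_of_code_eq hreg hFsep hH (hcode α hα β hβ)⟩

/-- Q(H̄) has the κ⁺-Knaster property: any κ⁺-sequence of conditions has a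
κ⁺-sized subfamily of pairwise compatible conditions. -/
theorem stmt6 (κ : Cardinal) (hreg : κ.IsRegular) (hunc : ℵ₀ < κ)
    (hpow : κ ^< κ = κ)
    (F : Set (Ordinal → Ordinal))
    (hF : #F = Cardinal.lift.{1,0} (Order.succ κ))
    (hFrange : ∀ f ∈ F, ∀ β < κ.ord, f β < κ.ord)
    (hFsep : ∀ f ∈ F, ∀ g ∈ F, f ≠ g → ∃ β < κ.ord, f β ≠ g β)
    (H : (Ordinal → Ordinal) → Ordinal → OSeq)
    (hH : ∀ f ∈ F, ∀ α < κ.ord, IsSeq κ (H f α))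
    (p : Ordinal → Cond κ F) :
    ∃ A : Set Ordinal, A ⊆ Set.Iio (Order.succ κ).ord ∧
      #A = Cardinal.lift.{1,0} (Order.succ κ) ∧
      ∀ α ∈ A, ∀ β ∈ A, Compat H (p α) (p β) :=
  stmt6_general κ hreg hpow F hFrange hFsep H hH p
end
end
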